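/- Suppose T : L^∞(Ω,F) → ℝ satisfies T(0) = 0, (G-Mo), (G-QL), (G-PC), and (G-PS), (G-NB) at every bounded F-measurable f. Assume moreover Ω ∉ N_G and that for every finite G-measurable partition π of Ω at most two elements of π satisfy T(1_A) > 0 (i.e., Π(G) = ∅). Then for any bounded F-measurable f, the conditional Chisini mean exists: there is a bounded G-measurable ĝ, simple over a two-element or one-element partition, with T(f·1_A) = T(ĝ·1_A) for all A ∈ G. -/
import Mathlib


open Filter Topology MeasureTheory

/-- Bounded measurable real-valued functions w.r.t. a σ-algebra `mG`. -/
def BddMeas {Ω : Type*} (mG : MeasurableSpace Ω) (f : Ω → ℝ) : Prop :=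
  Measurable[mG] f ∧ ∃ C : ℝ, ∀ ω, |f ω| ≤ C

/-- The class of irrelevant (null) events in `mG` for the functional `T`. -/
def NullG {Ω : Type*} (mG : MeasurableSpace Ω) (T : (Ω → ℝ) → ℝ) : Set (Set Ω) :=
  {N | MeasurableSet[mG] N ∧ ∀ g₁ g₂ : Ω → ℝ, BddMeas mG g₁ → BddMeas mG g₂ →
    T (g₁ + N.indicator g₂) = T g₁}

/-- (G-Mo): `T` is `G`-monotone. -/
def GMo {Ω : Type*} (mG : MeasurableSpace Ω) (T : (Ω → ℝ) → ℝ) : Prop :=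
  ∀ x y : ℝ, x < y → ∀ g : Ω → ℝ, BddMeas mG g → ∀ A : Set Ω,
    MeasurableSet[mG] A → A ∉ NullG mG T →
    T (A.indicator (fun _ => x) + Aᶜ.indicator g) <
      T (A.indicator (fun _ => y) + Aᶜ.indicator g)

/-- (G-QL): `T` is `G`-quasilinear. -/
def GQL {Ω : Type*} (mG : MeasurableSpace Ω) (T : (Ω → ℝ) → ℝ) : Prop :=
  ∀ g₁ g₂ : Ω → ℝ, BddMeas mG g₁ → BddMeas mG g₂ → ∀ A : Set Ω, MeasurableSet[mG] A →
    (∃ gb : Ω → ℝ, BddMeas mG gb ∧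
      T (A.indicator g₁ + Aᶜ.indicator gb) ≤ T (A.indicator g₂ + Aᶜ.indicator gb)) →
    ∀ g : Ω → ℝ, BddMeas mG g →
      T (A.indicator g₁ + Aᶜ.indicator g) ≤ T (A.indicator g₂ + Aᶜ.indicator g)

/-- (G-PC): `T` is `G`-pointwise continuous. -/
def GPC {Ω : Type*} (mG : MeasurableSpace Ω) (T : (Ω → ℝ) → ℝ) : Prop :=
  ∀ (gn : ℕ → Ω → ℝ) (g : Ω → ℝ), (∀ n, BddMeas mG (gn n)) → BddMeas mG g →
    (∃ C : ℝ, ∀ n ω, |gn n ω| ≤ C) →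
    (∀ ω, Tendsto (fun n => gn n ω) atTop (𝓝 (g ω))) →
    Tendsto (fun n => T (gn n)) atTop (𝓝 (T g))

/-- The sup norm of a bounded function. -/
noncomputable def supNorm {Ω : Type*} (f : Ω → ℝ) : ℝ := ⨆ ω, |f ω|

/-- (G-PS): `T` is `G`-pasting at `f`. -/
def GPS {Ω : Type*} (mG : MeasurableSpace Ω) (T : (Ω → ℝ) → ℝ) (f : Ω → ℝ) : Prop :=
  ∀ A₁ A₂ : Set Ω, MeasurableSet[mG] A₁ → MeasurableSet[mG] A₂ → Disjoint A₁ A₂ →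
    ∀ x₁ x₂ : ℝ, T (A₁.indicator f) = T (A₁.indicator fun _ => x₁) →
      T (A₂.indicator f) = T (A₂.indicator fun _ => x₂) →
      T (A₁.indicator f + A₂.indicator f) =
        T (A₁.indicator (fun _ => x₁) + A₂.indicator fun _ => x₂)

/-- (G-NB): `T` is `G`-norm bounded at `f`. -/
def GNB {Ω : Type*} (mG : MeasurableSpace Ω) (T : (Ω → ℝ) → ℝ) (f : Ω → ℝ) : Prop :=
  ∀ A : Set Ω, MeasurableSet[mG] A →
    T (A.indicator fun _ => -(supNorm f)) ≤ T (A.indicator f) ∧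
    T (A.indicator f) ≤ T (A.indicator fun _ => supNorm f)

section Aux
variable {Ω : Type*} {mG : MeasurableSpace Ω} {T : (Ω → ℝ) → ℝ}

lemma bdd_zero : BddMeas mG (0 : Ω → ℝ) :=
  ⟨measurable_const, 0, fun ω => by simp⟩

lemma bdd_const (x : ℝ) : BddMeas mG (fun _ : Ω => x) :=
  ⟨measurable_const, |x|, fun _ => le_refl _⟩

lemma bdd_indicator_const {A : Set Ω} (hA : MeasurableSet[mG] A) (x : ℝ) :
    BddMeas mG (A.indicator fun _ => x) := by
  refine ⟨measurable_const.indicator hA, |x|, fun ω => ?_⟩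
  by_cases h : ω ∈ A <;> simp [Set.indicator_of_mem, Set.indicator_of_notMem, h, abs_nonneg]

lemma bdd_add {g₁ g₂ : Ω → ℝ} (h₁ : BddMeas mG g₁) (h₂ : BddMeas mG g₂) :
    BddMeas mG (g₁ + g₂) := by
  obtain ⟨m₁, C₁, hC₁⟩ := h₁
  obtain ⟨m₂, C₂, hC₂⟩ := h₂
  exact ⟨m₁.add m₂, C₁ + C₂, fun ω =>
    (abs_add_le _ _).trans (add_le_add (hC₁ ω) (hC₂ ω))⟩

lemma indicator_split {A B : Set Ω} (hAB : A ⊆ B) (g : Ω → ℝ) :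
    A.indicator g + (B \ A).indicator g = B.indicator g := by
  funext ω
  simp only [Pi.add_apply, Set.indicator_apply, Set.mem_diff]
  rcases em (ω ∈ A) with h1 | h1 <;> rcases em (ω ∈ B) with h2 | h2
  · simp [h1, h2]
  · exact absurd (hAB h1) h2
  · simp [h1, h2]
  · simp [h1, h2]

lemma null_T_zero (hT0 : T 0 = 0) {A : Set Ω} (hA : A ∈ NullG mG T)
    (g : Ω → ℝ) (hg : BddMeas mG g) : T (A.indicator g) = 0 := by
  have h := hA.2 0 g bdd_zero hg
  simpa [hT0] using h

lemma strictMono_phi (hMo : GMo mG T) {A : Set Ω} (hA : MeasurableSet[mG] A)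
    (hAn : A ∉ NullG mG T) : StrictMono (fun x : ℝ => T (A.indicator fun _ => x)) := by
  intro x y hxy
  have h := hMo x y hxy 0 bdd_zero A hA hAn
  simpa using h

lemma pos_of_not_null (hT0 : T 0 = 0) (hMo : GMo mG T) {A : Set Ω}
    (hA : MeasurableSet[mG] A) (hAn : A ∉ NullG mG T) :
    0 < T (A.indicator fun _ => (1 : ℝ)) := by
  have h : T (A.indicator fun _ => (0:ℝ)) < T (A.indicator fun _ => (1:ℝ)) :=
    strictMono_phi hMo hA hAn zero_lt_one
  rwa [show (A.indicator fun _ => (0:ℝ)) = 0 from funext fun ω => by simp, hT0] at h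

lemma nullf_zero (hT0 : T 0 = 0) {f : Ω → ℝ} (hNBf : GNB mG T f)
    {A : Set Ω} (hA : A ∈ NullG mG T) : T (A.indicator f) = 0 := by
  have h := hNBf A hA.1
  rw [null_T_zero hT0 hA (fun _ => -(supNorm f)) (bdd_const _),
    null_T_zero hT0 hA (fun _ => supNorm f) (bdd_const _)] at h
  linarith [h.1, h.2]

lemma phi_continuous (hPC : GPC mG T) {A : Set Ω} (hA : MeasurableSet[mG] A) :
    Continuous (fun x : ℝ => T (A.indicator fun _ => x)) := by
  apply SeqContinuous.continuous
  intro u x hux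
  obtain ⟨C, hC⟩ : ∃ C : ℝ, ∀ n, |u n| ≤ C := by
    obtain ⟨C, hC⟩ := (hux.abs).bddAbove_range
    exact ⟨C, fun n => hC ⟨n, rfl⟩⟩
  have h := hPC (fun n => A.indicator fun _ => u n) (A.indicator fun _ => x)
    (fun n => bdd_indicator_const hA _) (bdd_indicator_const hA _)
    ⟨C, fun n ω => ?_⟩ (fun ω => ?_)
  · exact h
  · by_cases hm : ω ∈ A
    · simpa [Set.indicator_of_mem hm] using hC n
    · simp only [Set.indicator_of_notMem hm, abs_zero]
      exact (abs_nonneg _).trans (hC 0)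
  · by_cases hm : ω ∈ A
    · simpa [Set.indicator_of_mem hm] using hux
    · simp [Set.indicator_of_notMem hm]

lemma chisini (hPC : GPC mG T) {f : Ω → ℝ} (hNBf : GNB mG T f)
    {A : Set Ω} (hA : MeasurableSet[mG] A) :
    ∃ x : ℝ, T (A.indicator fun _ => x) = T (A.indicator f) := by
  set M := supNorm f with hMdef
  have hM : 0 ≤ M := Real.iSup_nonneg fun ω => abs_nonneg _
  have hmem : T (A.indicator f) ∈
      Set.Icc (T (A.indicator fun _ => -M)) (T (A.indicator fun _ => M)) :=
    ⟨(hNBf A hA).1, (hNBf A hA).2⟩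
  have himg := intermediate_value_Icc (by linarith : -M ≤ M)
    (phi_continuous hPC hA).continuousOn hmem
  obtain ⟨x, _, hx⟩ := himg
  exact ⟨x, hx⟩

lemma atom_const (hT0 : T 0 = 0) (hMo : GMo mG T) (hPC : GPC mG T)
    {f : Ω → ℝ} (hNBf : GNB mG T f) (hPSf : GPS mG T f)
    {B : Set Ω} (hB : MeasurableSet[mG] B) (hBn : B ∉ NullG mG T)
    (hatom : ∀ C : Set Ω, MeasurableSet[mG] C → C ⊆ B → C ∉ NullG mG T →
      B \ C ∈ NullG mG T) :
    ∃ x : ℝ, ∀ A : Set Ω, MeasurableSet[mG] A → A ⊆ B →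
      T (A.indicator f) = T (A.indicator fun _ => x) := by
  obtain ⟨x, hx⟩ := chisini hPC hNBf hB
  refine ⟨x, fun A hA hAB => ?_⟩
  by_cases hAn : A ∈ NullG mG T
  · rw [nullf_zero hT0 hNBf hAn, null_T_zero hT0 hAn (fun _ => x) (bdd_const x)]
  · have hdiff := hatom A hA hAB hAn
    obtain ⟨a, ha⟩ := chisini hPC hNBf hA
    have hdisj : Disjoint A (B \ A) := disjoint_sdiff_self_right
    have hd2 : T ((B \ A).indicator f) = T ((B \ A).indicator fun _ => a) := by
      rw [nullf_zero hT0 hNBf hdiff, null_T_zero hT0 hdiff (fun _ => a) (bdd_const a)]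
    have hps := hPSf A (B \ A) hA (hB.diff hA) hdisj a a ha.symm hd2
    rw [indicator_split hAB f, indicator_split hAB (fun _ => a)] at hps
    have hax : a = x := (strictMono_phi hMo hB hBn).injective (hps.symm.trans hx.symm)
    rw [← hax]
    exact ha.symm
end Aux

theorem stmt19 {Ω : Type*} (mF mG : MeasurableSpace Ω) (hsub : mG ≤ mF)
    (T : (Ω → ℝ) → ℝ) (hT0 : T 0 = 0) (hMo : GMo mG T) (hQL : GQL mG T) (hPC : GPC mG T)
    (hPS : ∀ f : Ω → ℝ, BddMeas mF f → GPS mG T f)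
    (hNB : ∀ f : Ω → ℝ, BddMeas mF f → GNB mG T f)
    (hOmega : (Set.univ : Set Ω) ∉ NullG mG T)
    (hPiEmpty : ∀ (s : Finset ℕ) (A : ℕ → Set Ω),
      (∀ i ∈ s, MeasurableSet[mG] (A i)) →
      (∀ i ∈ s, ∀ j ∈ s, i ≠ j → Disjoint (A i) (A j)) →
      (⋃ i ∈ s, A i) = Set.univ →
      ¬ ∃ i ∈ s, ∃ j ∈ s, ∃ k ∈ s, i ≠ j ∧ i ≠ k ∧ j ≠ k ∧
        0 < T ((A i).indicator fun _ => (1 : ℝ)) ∧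
        0 < T ((A j).indicator fun _ => (1 : ℝ)) ∧
        0 < T ((A k).indicator fun _ => (1 : ℝ))) :
    ∀ f : Ω → ℝ, BddMeas mF f →
      ∃ gh : Ω → ℝ, BddMeas mG gh ∧
        (∃ (B : Set Ω) (x y : ℝ), MeasurableSet[mG] B ∧
          gh = B.indicator (fun _ => x) + Bᶜ.indicator (fun _ => y)) ∧
        ∀ A : Set Ω, MeasurableSet[mG] A → T (A.indicator f) = T (A.indicator gh) := by
  intro f hf
  have hNBf := hNB f hf
  have hPSf := hPS f hf
  by_cases hcase : ∃ B : Set Ω, MeasurableSet[mG] B ∧ B ∉ NullG mG T ∧ Bᶜ ∉ NullG mG T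
  · obtain ⟨B, hB, hBn, hBcn⟩ := hcase
    have key : ∀ D : Set Ω, MeasurableSet[mG] D → Dᶜ ∉ NullG mG T →
        ∀ C : Set Ω, MeasurableSet[mG] C → C ⊆ D → C ∉ NullG mG T →
          D \ C ∈ NullG mG T := by
      intro D hD hDcn C hC hCD hCn
      by_contra hX
      refine hPiEmpty {0, 1, 2} (fun i => match i with | 0 => C | 1 => D \ C | _ => Dᶜ)
        ?_ ?_ ?_ ⟨0, by decide, 1, by decide, 2, by decide, by decide, by decide, by decide,
          pos_of_not_null hT0 hMo hC hCn, pos_of_not_null hT0 hMo (hD.diff hC) hX,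
          pos_of_not_null hT0 hMo hD.compl hDcn⟩
      · intro i hi
        fin_cases hi
        · exact hC
        · exact hD.diff hC
        · exact hD.compl
      · have d1 : Disjoint C (D \ C) := disjoint_sdiff_self_right
        have d2 : Disjoint C Dᶜ := disjoint_compl_right.mono_left hCD
        have d3 : Disjoint (D \ C) Dᶜ := disjoint_compl_right.mono_left Set.diff_subset
        intro i hi j hj hij
        fin_cases hi <;> fin_cases hj <;>
          first
          | exact absurd rfl hij
          | exact d1 | exact d1.symm | exact d2 | exact d2.symm | exact d3 | exact d3.symm
      · apply Set.eq_univ_of_forall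
        intro ω
        simp only [Set.mem_iUnion, exists_prop]
        rcases em (ω ∈ D) with hD' | hD'
        · rcases em (ω ∈ C) with hC' | hC'
          · exact ⟨0, by decide, hC'⟩
          · exact ⟨1, by decide, ⟨hD', hC'⟩⟩
        · exact ⟨2, by decide, hD'⟩
    have hBatom := key B hB hBcn
    have hBcatom : ∀ C : Set Ω, MeasurableSet[mG] C → C ⊆ Bᶜ → C ∉ NullG mG T →
        Bᶜ \ C ∈ NullG mG T :=
      key Bᶜ hB.compl ((compl_compl B).symm ▸ hBn)
    obtain ⟨x, hxall⟩ := atom_const hT0 hMo hPC hNBf hPSf hB hBn hBatom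
    obtain ⟨y, hyall⟩ := atom_const hT0 hMo hPC hNBf hPSf hB.compl hBcn hBcatom
    refine ⟨B.indicator (fun _ => x) + Bᶜ.indicator (fun _ => y),
      bdd_add (bdd_indicator_const hB x) (bdd_indicator_const hB.compl y),
      ⟨B, x, y, hB, rfl⟩, fun A hA => ?_⟩
    have h1 := hxall (A ∩ B) (hA.inter hB) Set.inter_subset_right
    have h2 := hyall (A ∩ Bᶜ) (hA.inter hB.compl) Set.inter_subset_right
    have hdisj : Disjoint (A ∩ B) (A ∩ Bᶜ) :=
      disjoint_compl_right.mono Set.inter_subset_right Set.inter_subset_right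
    have hps := hPSf (A ∩ B) (A ∩ Bᶜ) (hA.inter hB) (hA.inter hB.compl) hdisj x y h1 h2
    have e1 : (A ∩ B).indicator f + (A ∩ Bᶜ).indicator f = A.indicator f := by
      funext ω
      simp only [Pi.add_apply, Set.indicator_apply, Set.mem_inter_iff, Set.mem_compl_iff]
      rcases em (ω ∈ A) with h | h <;> rcases em (ω ∈ B) with h' | h' <;> simp [h, h']
    have e2 : (A ∩ B).indicator (fun _ => x) + (A ∩ Bᶜ).indicator (fun _ => y) =
        A.indicator (B.indicator (fun _ => x) + Bᶜ.indicator (fun _ => y)) := by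
      funext ω
      simp only [Pi.add_apply, Set.indicator_apply, Set.mem_inter_iff, Set.mem_compl_iff]
      rcases em (ω ∈ A) with h | h <;> rcases em (ω ∈ B) with h' | h' <;> simp [h, h']
    rw [e1, e2] at hps
    exact hps
  · push_neg at hcase
    have hatom : ∀ C : Set Ω, MeasurableSet[mG] C → C ⊆ Set.univ → C ∉ NullG mG T →
        Set.univ \ C ∈ NullG mG T := by
      intro C hC _ hCn
      rw [show Set.univ \ C = Cᶜ from by ext ω; simp]
      exact hcase C hC hCn
    obtain ⟨x, hxall⟩ := atom_const hT0 hMo hPC hNBf hPSf MeasurableSet.univ hOmega hatom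
    refine ⟨(Set.univ : Set Ω).indicator (fun _ => x) +
        (Set.univ : Set Ω)ᶜ.indicator (fun _ => (0 : ℝ)),
      bdd_add (bdd_indicator_const MeasurableSet.univ x)
        (bdd_indicator_const MeasurableSet.univ.compl 0),
      ⟨Set.univ, x, 0, MeasurableSet.univ, rfl⟩, fun A hA => ?_⟩
    rw [hxall A hA (Set.subset_univ A)]
    congr 1
    funext ω
    rcases em (ω ∈ A) with h | h <;> simp [Set.indicator_apply, h]
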